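/- arXiv:1707.04998 — 2 statements merged into one kernel-verified Lean document; each statement's English description precedes it below -/
import Mathlib

section
/- Let X1, …, Xn be independent and identically distributed non-negative random variables with continuous distribution function F, survival function F̄ = 1 − F, and finite mean μ, and let 2 ≤ ν ≤ n be an integer. Define the symmetric kernel h(x1, …, xν) = (x1 + x2 + ⋯ + xν − ν min(x1, …, xν))/ν and the U-statistic Ŝ_ν = C(n,ν)^{-1} Σ_{i1 < i2 < ⋯ < iν} h(X_{i1}, …, X_{iν}). Then E(Ŝ_ν) = S_ν, where S_ν = −ν Cov(X1, F̄(X1)^{ν−1}) is the absolute S-Gini index; i.e., Ŝ_ν is an unbiased estimator of S_ν. -/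
/-!
Since `F` is continuous, the sample values are almost surely pairwise distinct, so on a
`ν`-subset `S` the minimum is `∑_{i ∈ S} X_i · 1{X_i < X_j for all j ∈ S, j ≠ i}`. Freezing `X_i`
and using independence, `E[g(X_i); X_i < X_j ∀ j ∈ T] = E[g(X) F̄(X)^|T|]`. With `g = id` this
gives `E[min_S X] = ν E[X F̄(X)^(ν-1)]`, and with `g = 1` it gives `ν E[F̄(X)^(ν-1)] = 1`. Hence
every kernel has mean `μ - ν E[X F̄(X)^(ν-1)] = -ν Cov(X, F̄(X)^(ν-1))`, and so does their average.
-/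

open MeasureTheory ProbabilityTheory Set Function

theorem Finset.sum_ite_forall_lt_eq_inf' {ι α R : Type*} [DecidableEq ι] [LinearOrder α]
    [AddCommMonoid R] {s : Finset ι} (hs : s.Nonempty) {f : ι → α} (hf : InjOn f s)
    (g : α → R) :
    ∑ i ∈ s, (if ∀ j ∈ s.erase i, f i < f j then g (f i) else 0) = g (s.inf' hs f) := by
  obtain ⟨a, ha, hfa⟩ := s.exists_mem_eq_inf' hs f
  have hmin : ∀ i ∈ s, (∀ j ∈ s.erase i, f i < f j) ↔ i = a := by
    refine fun i hi => ⟨fun h => by_contra fun hia => ?_, ?_⟩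
    · exact (h a (mem_erase.2 ⟨Ne.symm hia, ha⟩)).not_ge (hfa ▸ inf'_le f hi)
    · rintro rfl j hj
      exact (hfa ▸ inf'_le f (mem_of_mem_erase hj)).lt_of_ne
        (hf.ne ha (mem_of_mem_erase hj) (ne_of_mem_erase hj).symm)
  rw [sum_congr rfl fun i hi => if_congr (hmin i hi) rfl rfl, sum_ite_eq' s a, if_pos ha, hfa]

theorem ProbabilityTheory.nullSingletonClass_of_continuous_cdf (m : Measure ℝ)
    [IsProbabilityMeasure m] (h : Continuous (cdf m)) : NullSingletonClass m where
  measure_singleton x := by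
    rw [← measure_cdf m, StieltjesFunction.measure_singleton,
      h.continuousWithinAt.leftLim_eq, sub_self, ENNReal.ofReal_zero]

/-- `h(x_{i₁}, …, x_{i_ν})` for `S = {i₁, …, i_ν}`. -/
noncomputable def sginiKernel {ι : Type*} (ν : ℕ) (S : Finset ι) (hS : S.Nonempty) (x : ι → ℝ) :
    ℝ :=
  ((∑ i ∈ S, x i) - ν * S.inf' hS x) / ν

/-- `S_ν = −ν Cov(X, F̄(X)^(ν−1))` for `X ∼ m`, where `F̄ = 1 - cdf m`. -/
noncomputable def absSGini (m : Measure ℝ) (ν : ℕ) : ℝ :=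
  -ν * (∫ x, x * (1 - cdf m x) ^ (ν - 1) ∂m - (∫ x, x ∂m) * ∫ x, (1 - cdf m x) ^ (ν - 1) ∂m)

section

variable {Ω : Type*} [MeasurableSpace Ω] {P : Measure Ω}

theorem Finset.integrable_inf' {ι : Type*} {S : Finset ι} (hS : S.Nonempty) {f : ι → Ω → ℝ}
    (hf : ∀ i ∈ S, Integrable (f i) P) : Integrable (fun ω => S.inf' hS fun i => f i ω) P := by
  convert Finset.inf'_induction (H := hS) (f := f) (p := fun g => Integrable g P)
    (fun _ h₁ _ h₂ => h₁.inf h₂) hf using 1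
  ext ω
  exact (Finset.inf'_apply hS f ω).symm

theorem ProbabilityTheory.IndepFun.ae_ne [IsFiniteMeasure P] {α : Type*} [MeasurableSpace α]
    [MeasurableEq α] {X Y : Ω → α} (hXY : IndepFun X Y P) (hX : Measurable X) (hY : Measurable Y)
    [NullSingletonClass (P.map Y)] : ∀ᵐ ω ∂P, X ω ≠ Y ω := by
  have hdiag : MeasurableSet {p : α × α | p.1 = p.2} := measurableSet_diagonal
  simp only [ae_iff, ne_eq, not_not]
  change P ((fun ω => (X ω, Y ω)) ⁻¹' {p | p.1 = p.2}) = 0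
  rw [← Measure.map_apply (hX.prodMk hY) hdiag,
    (indepFun_iff_map_prod_eq_prod_map_map hX.aemeasurable hY.aemeasurable).1 hXY,
    Measure.prod_apply hdiag]
  simp only [preimage_ofPred_eq, ofPred_eq_eq_singleton', measure_singleton, lintegral_const,
    zero_mul]

theorem ProbabilityTheory.IndepFun.integral_comp_eq_integral_integral [IsFiniteMeasure P]
    {α β : Type*} [MeasurableSpace α] [MeasurableSpace β] {X : Ω → α} {Y : Ω → β}
    (hXY : IndepFun X Y P) (hX : Measurable X) (hY : Measurable Y) {Φ : α → β → ℝ}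
    (hΦ : Measurable (uncurry Φ)) (hint : Integrable (fun ω => Φ (X ω) (Y ω)) P) :
    ∫ ω, Φ (X ω) (Y ω) ∂P = ∫ x, ∫ ω, Φ x (Y ω) ∂P ∂(P.map X) := by
  have hXY' : Measurable fun ω => (X ω, Y ω) := hX.prodMk hY
  have hmap : P.map (fun ω => (X ω, Y ω)) = (P.map X).prod (P.map Y) :=
    (indepFun_iff_map_prod_eq_prod_map_map hX.aemeasurable hY.aemeasurable).1 hXY
  have hint' : Integrable (uncurry Φ) ((P.map X).prod (P.map Y)) := by
    rw [← hmap]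
    exact (integrable_map_measure hΦ.aestronglyMeasurable hXY'.aemeasurable).2 hint
  calc ∫ ω, Φ (X ω) (Y ω) ∂P = ∫ p, uncurry Φ p ∂(P.map fun ω => (X ω, Y ω)) :=
        (integral_map hXY'.aemeasurable hΦ.aestronglyMeasurable).symm
    _ = ∫ x, ∫ y, Φ x y ∂(P.map Y) ∂(P.map X) := by rw [hmap, integral_prod _ hint']; rfl
    _ = ∫ x, ∫ ω, Φ x (Y ω) ∂P ∂(P.map X) := by
        congr 1 with x
        exact integral_map hY.aemeasurable (hΦ.comp measurable_prodMk_left).aestronglyMeasurable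

variable {ι : Type*} {X : ι → Ω → ℝ} {m : Measure ℝ}

theorem measurableSet_forall_lt (hX : ∀ i, Measurable (X i)) {f : Ω → ℝ} (hf : Measurable f)
    (T : Finset ι) : MeasurableSet {ω | ∀ j ∈ T, f ω < X j ω} := by
  simp only [ofPred_forall]
  exact Finset.measurableSet_biInter T fun j _ => measurableSet_lt hf (hX j)

theorem integrable_ite_forall_lt (hX : ∀ i, Measurable (X i)) (hlaw : ∀ i, P.map (X i) = m)
    (i : ι) (T : Finset ι) {g : ℝ → ℝ} (hg : Measurable g) (hgm : Integrable g m) :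
    Integrable (fun ω => if ∀ j ∈ T, X i ω < X j ω then g (X i ω) else 0) P := by
  have hgX : Integrable (fun ω => g (X i ω)) P :=
    (integrable_map_measure hg.aestronglyMeasurable (hX i).aemeasurable).1 (hlaw i ▸ hgm)
  refine (hgX.indicator (measurableSet_forall_lt hX (hX i) T)).congr (ae_of_all _ fun ω => ?_)
  simp [indicator_apply]

theorem ProbabilityTheory.iIndepFun.measureReal_forall_lt [IsProbabilityMeasure m]
    (hX : ∀ i, Measurable (X i)) (hindep : iIndepFun X P) (hlaw : ∀ i, P.map (X i) = m)
    (T : Finset ι) (x : ℝ) :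
    P.real {ω | ∀ j ∈ T, x < X j ω} = (1 - cdf m x) ^ T.card := by
  have hset : {ω | ∀ j ∈ T, x < X j ω} = ⋂ j ∈ T, X j ⁻¹' Ioi x := by ext; simp
  have hsurv : ∀ j, P.real (X j ⁻¹' Ioi x) = 1 - cdf m x := fun j => by
    rw [← map_measureReal_apply (hX j) measurableSet_Ioi, hlaw, ← compl_Iic,
      probReal_compl_eq_one_sub measurableSet_Iic, cdf_eq_real]
  rw [hset, measureReal_def, hindep.meas_biInter fun j _ => ⟨Ioi x, measurableSet_Ioi, rfl⟩,
    ENNReal.toReal_prod]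
  simp_rw [← measureReal_def, hsurv, Finset.prod_const]

theorem ProbabilityTheory.iIndepFun.integral_ite_forall_lt [IsFiniteMeasure P]
    [IsProbabilityMeasure m] (hX : ∀ i, Measurable (X i)) (hindep : iIndepFun X P)
    (hlaw : ∀ i, P.map (X i) = m) {i : ι} {T : Finset ι} (hiT : i ∉ T) {g : ℝ → ℝ}
    (hg : Measurable g) (hgm : Integrable g m) :
    ∫ ω, (if ∀ j ∈ T, X i ω < X j ω then g (X i ω) else 0) ∂P =
      ∫ x, g x * (1 - cdf m x) ^ T.card ∂m := by
  let V : Ω → (T → ℝ) := fun ω j => X j ω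
  have hV : Measurable V := measurable_pi_lambda _ fun j => hX j
  have hind : IndepFun (X i) V P :=
    (hindep.indepFun_finset {i} T (Finset.disjoint_singleton_left.2 hiT) hX).comp
      (measurable_pi_apply (⟨i, Finset.mem_singleton_self i⟩ : ({i} : Finset ι)))
      measurable_id
  let Φ : ℝ → (T → ℝ) → ℝ := fun x v => if ∀ j, x < v j then g x else 0
  have hΦ : Measurable (uncurry Φ) := by
    refine Measurable.ite ?_ (hg.comp measurable_fst) measurable_const
    simp only [ofPred_forall]
    exact .iInter fun j => measurableSet_lt measurable_fst
      ((measurable_pi_apply j).comp measurable_snd)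
  have hΦV : (fun ω => Φ (X i ω) (V ω)) =
      fun ω => if ∀ j ∈ T, X i ω < X j ω then g (X i ω) else 0 := by
    ext ω; simp [Φ, V]
  rw [← hΦV, hind.integral_comp_eq_integral_integral (hX i) hV hΦ
    (hΦV ▸ integrable_ite_forall_lt hX hlaw i T hg hgm), hlaw]
  congr 1 with x
  calc ∫ ω, Φ x (V ω) ∂P = ∫ ω, {ω | ∀ j ∈ T, x < X j ω}.indicator (fun _ => g x) ω ∂P := by
        simp [Φ, V, indicator_apply]
    _ = g x * (1 - cdf m x) ^ T.card := by
        rw [integral_indicator_const _ (measurableSet_forall_lt hX measurable_const T),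
          hindep.measureReal_forall_lt hX hlaw, smul_eq_mul, mul_comm]

theorem ProbabilityTheory.iIndepFun.integral_comp_inf' [IsFiniteMeasure P] [DecidableEq ι]
    [IsProbabilityMeasure m] [NullSingletonClass m]
    (hX : ∀ i, Measurable (X i)) (hindep : iIndepFun X P) (hlaw : ∀ i, P.map (X i) = m)
    {S : Finset ι} (hS : S.Nonempty) {g : ℝ → ℝ} (hg : Measurable g) (hgm : Integrable g m) :
    ∫ ω, g (S.inf' hS fun i => X i ω) ∂P =
      S.card * ∫ x, g x * (1 - cdf m x) ^ (S.card - 1) ∂m := by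
  have hinj : ∀ᵐ ω ∂P, InjOn (fun i => X i ω) S := by
    refine (Filter.eventually_all_finset S).2 fun i _ => (Filter.eventually_all_finset S).2
      fun j _ => ?_
    by_cases hij : i = j
    · exact ae_of_all _ fun _ _ => hij
    · have : NullSingletonClass (P.map (X j)) := hlaw j ▸ ‹_›
      exact ((hindep.indepFun hij).ae_ne (hX i) (hX j)).mono fun ω hne heq => absurd heq hne
  calc ∫ ω, g (S.inf' hS fun i => X i ω) ∂P
      = ∫ ω, ∑ i ∈ S, (if ∀ j ∈ S.erase i, X i ω < X j ω then g (X i ω) else 0) ∂P :=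
        integral_congr_ae (hinj.mono fun ω h => (S.sum_ite_forall_lt_eq_inf' hS h g).symm)
    _ = ∑ i ∈ S, ∫ ω, (if ∀ j ∈ S.erase i, X i ω < X j ω then g (X i ω) else 0) ∂P :=
        integral_finsetSum S fun i _ => integrable_ite_forall_lt hX hlaw i _ hg hgm
    _ = ∑ _i ∈ S, ∫ x, g x * (1 - cdf m x) ^ (S.card - 1) ∂m := by
        refine Finset.sum_congr rfl fun i hi => ?_
        rw [hindep.integral_ite_forall_lt hX hlaw (S.notMem_erase i) hg hgm,
          S.card_erase_of_mem hi]
    _ = S.card * ∫ x, g x * (1 - cdf m x) ^ (S.card - 1) ∂m := by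
        rw [Finset.sum_const, nsmul_eq_mul]

theorem integrable_sginiKernel (hX : ∀ i, Integrable (X i) P) (ν : ℕ) {S : Finset ι}
    (hS : S.Nonempty) : Integrable (fun ω => sginiKernel ν S hS (X · ω)) P :=
  ((integrable_finsetSum S fun i _ => hX i).sub
    ((S.integrable_inf' hS fun i _ => hX i).const_mul _)).div_const _

theorem ProbabilityTheory.iIndepFun.integral_sginiKernel [IsProbabilityMeasure P] [DecidableEq ι]
    [IsProbabilityMeasure m] [NullSingletonClass m]
    (hX : ∀ i, Measurable (X i)) (hindep : iIndepFun X P) (hlaw : ∀ i, P.map (X i) = m)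
    (hm : Integrable id m) {S : Finset ι} (hS : S.Nonempty) :
    ∫ ω, sginiKernel S.card S hS (X · ω) ∂P = absSGini m S.card := by
  have hXi : ∀ i, Integrable (X i) P := fun i =>
    (integrable_map_measure aestronglyMeasurable_id (hX i).aemeasurable).1 (hlaw i ▸ hm)
  have hsum : ∫ ω, ∑ i ∈ S, X i ω ∂P = S.card * ∫ x, x ∂m := by
    rw [integral_finsetSum S fun i _ => hXi i, Finset.sum_congr rfl fun i _ =>
      (hlaw i ▸ integral_map (hX i).aemeasurable aestronglyMeasurable_id).symm,
      Finset.sum_const, nsmul_eq_mul]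
    rfl
  have hmin := hindep.integral_comp_inf' hX hlaw hS measurable_id hm
  have hone := hindep.integral_comp_inf' hX hlaw hS measurable_const (integrable_const (1 : ℝ))
  have hcard : (S.card : ℝ) ≠ 0 := by exact_mod_cast hS.card_pos.ne'
  simp only [integral_const, probReal_univ, smul_eq_mul, one_mul, mul_one] at hone
  simp only [sginiKernel, absSGini]
  rw [integral_div, integral_sub (integrable_finsetSum S fun i _ => hXi i)
    ((S.integrable_inf' hS fun i _ => hXi i).const_mul _), integral_const_mul, hsum]
  simp only [id] at hmin
  rw [hmin]
  field_simp
  linear_combination (∫ x, x ∂m) * hone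

end

/-- The U-statistic `Ŝ_ν` with symmetric kernel
`h(x₁, …, x_ν) = (x₁ + ⋯ + x_ν − ν min(x₁, …, x_ν))/ν` built from an i.i.d. sample
`X₁, …, X_n` is an unbiased estimator of the absolute S-Gini index
`S_ν = −ν Cov(X₁, F̄(X₁)^{ν−1})`. -/
theorem ustatistic_unbiased_for_sgini {Ω : Type*} [MeasurableSpace Ω]
    (P : Measure Ω) [IsProbabilityMeasure P] (n ν : ℕ) (hν : 2 ≤ ν) (hνn : ν ≤ n)
    (X : Fin n → Ω → ℝ) (hm : ∀ i, Measurable (X i))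
    (hid : ∀ i, IdentDistrib (X i) (X ⟨0, by omega⟩) P P)
    (hindep : iIndepFun X P)
    (hint : Integrable (X ⟨0, by omega⟩) P)
    (μ : ℝ) (hμ : μ = ∫ ω, X ⟨0, by omega⟩ ω ∂P)
    (F : ℝ → ℝ) (hF : ∀ x, F x = (P.map (X ⟨0, by omega⟩) (Set.Iic x)).toReal)
    (hFcont : Continuous F) :
    ∫ ω, ((n.choose ν : ℝ))⁻¹ *
        ∑ S ∈ (Finset.powersetCard ν (Finset.univ : Finset (Fin n))).attach,
          ((∑ i ∈ S.1, X i ω) -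
              (ν : ℝ) * S.1.inf' (Finset.card_pos.mp
                (by rw [(Finset.mem_powersetCard.mp S.2).2]; omega)) (fun i => X i ω)) /
            (ν : ℝ) ∂P =
      -(ν : ℝ) * ((∫ ω, X ⟨0, by omega⟩ ω * (1 - F (X ⟨0, by omega⟩ ω)) ^ (ν - 1) ∂P) -
        μ * (∫ ω, (1 - F (X ⟨0, by omega⟩ ω)) ^ (ν - 1) ∂P)) := by
  set X₀ := X ⟨0, by omega⟩
  have hX₀ : Measurable X₀ := hm _
  set m := P.map X₀
  have : IsProbabilityMeasure m := Measure.isProbabilityMeasure_map hX₀.aemeasurable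
  have hlaw : ∀ i, P.map (X i) = m := fun i => (hid i).map_eq
  have hcdf : ⇑(cdf m) = F := funext fun x => by rw [cdf_eq_real, hF, measureReal_def]
  have : NullSingletonClass m := nullSingletonClass_of_continuous_cdf m (hcdf ▸ hFcont)
  have hmean : Integrable id m :=
    (integrable_map_measure aestronglyMeasurable_id hX₀.aemeasurable).2 hint
  have hkernel : ∀ S ∈ Finset.powersetCard ν Finset.univ, ∀ hS : S.Nonempty,
      ∫ ω, sginiKernel ν S hS (X · ω) ∂P = absSGini m ν := fun S hS hne => by
    rw [← (Finset.mem_powersetCard.1 hS).2]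
    exact hindep.integral_sginiKernel hm hlaw hmean hne
  have hsgini : absSGini m ν = -(ν : ℝ) * ((∫ ω, X₀ ω * (1 - F (X₀ ω)) ^ (ν - 1) ∂P) -
      μ * (∫ ω, (1 - F (X₀ ω)) ^ (ν - 1) ∂P)) := by
    simp only [absSGini, hcdf, hμ]
    rw [integral_map, integral_map, integral_map] <;> fun_prop
  change ∫ ω, _ * ∑ S ∈ (Finset.powersetCard ν Finset.univ).attach,
    sginiKernel ν S.1 _ (X · ω) ∂P = _
  rw [integral_const_mul, integral_finsetSum _ fun S _ => integrable_sginiKernel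
      (fun i => (hid i).integrable_iff.2 hint) ν _,
    Finset.sum_congr rfl fun S _ => hkernel S.1 S.2 _, Finset.sum_const, Finset.card_attach,
    Finset.card_powersetCard, Finset.card_univ, Fintype.card_fin, nsmul_eq_mul, ← mul_assoc,
    inv_mul_cancel₀ (by exact_mod_cast (Nat.choose_pos hνn).ne'), one_mul, hsgini]
end

section
/- Let X1, X2, … be independent and identically distributed non-negative random variables with continuous distribution function F, survival function F̄ = 1 − F, finite second moment and positive mean μ, let ν ≥ 2 be an integer, let R_ν = (−ν/μ) Cov(X1, F̄(X1)^{ν−1}), and let F̄_n(x) = (1/n) Σ_{i=1}^n 1{Xi > x} be the empirical survival function. Define Ĉ(Xi, R_ν) = (1 − ν F̄_n(Xi)^{ν−1}) Xi − R_ν Xi. Then (1/n) Σ_{i=1}^n Ĉ²(Xi, R_ν) converges in probability, as n → ∞, to σ₁² = Var( (1 − ν F̄(X1)^{ν−1} − R_ν) X1 ) = E[ ((1 − ν F̄(X1)^{ν−1} − R_ν) X1)² ]. -/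
/-!
Write `C(p, x) = (1 - ν p^(ν-1) - R) x`, so that the summands of the statement are
`Ĉᵢ² = C(F̄ₙ(Xᵢ), Xᵢ)²`, and put `Cᵢ = C(F̄(Xᵢ), Xᵢ)`.

Since `F` is continuous, `F(X₁)` is uniform on `[0, 1]`, so `E F̄(X₁)^(ν-1) = 1/ν`; this is the
normalisation built into `R_ν`, and it gives `E C₁ = 0`, hence `Var C₁ = E C₁²`. By the strong law,
`(1/n) Σ Cᵢ² → E C₁²`. As `p ↦ C(p, x)²` is Lipschitz on `[0, 1]` with constant `O(x²)`, the rest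
`(1/n) Σ (Ĉᵢ² - Cᵢ²)` is bounded by `K (1/n) Σ |F̄ₙ(Xᵢ) - F̄(Xᵢ)| Xᵢ²`, and it suffices to show that
this tends to `0` in `L¹`. Now `F̄ₙ(Xᵢ) - F̄(Xᵢ) = (1/n) Σⱼ (1{Xᵢ < Xⱼ} - F̄(Xᵢ))`, and in the
expansion of `E[(F̄ₙ(Xᵢ) - F̄(Xᵢ))² Xᵢ²]` every cross term `j ≠ l` vanishes: one of `j`, `l` differs
from the two other indices, and integrating out that independent variable kills its factor
`1{Xᵢ < Xⱼ} - F̄(Xᵢ)`. So this second moment is at most `E X₁² / n`, and AM-GM gives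
`E[|F̄ₙ(Xᵢ) - F̄(Xᵢ)| Xᵢ²] ≤ E X₁² / √n`.
-/

open MeasureTheory ProbabilityTheory Filter Set Topology

namespace MeasureTheory

variable {α ι E : Type*} [MeasurableSpace α] {μ : Measure α} [SeminormedAddCommGroup E]
  {l : Filter ι}

theorem TendstoInMeasure.add {f f' : ι → α → E} {g g' : α → E}
    (hf : TendstoInMeasure μ f l g) (hf' : TendstoInMeasure μ f' l g') :
    TendstoInMeasure μ (f + f') l (g + g') := by
  rw [tendstoInMeasure_iff_norm] at hf hf' ⊢
  intro ε hε
  have hsub : ∀ i, {x | ε ≤ ‖(f + f') i x - (g + g') x‖} ⊆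
      {x | ε / 2 ≤ ‖f i x - g x‖} ∪ {x | ε / 2 ≤ ‖f' i x - g' x‖} := by
    intro i x hx
    by_contra h
    simp only [mem_union, mem_ofPred_eq, not_or, not_le] at h hx
    have htri : ‖(f + f') i x - (g + g') x‖ ≤ ‖f i x - g x‖ + ‖f' i x - g' x‖ := by
      simpa only [Pi.add_apply, add_sub_add_comm] using norm_add_le (f i x - g x) (f' i x - g' x)
    linarith
  have hlim := (hf _ (half_pos hε)).add (hf' _ (half_pos hε))
  rw [add_zero] at hlim
  exact tendsto_of_tendsto_of_tendsto_of_le_of_le tendsto_const_nhds hlim (fun _ => bot_le)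
    fun i => (measure_mono (hsub i)).trans (measure_union_le _ _)

theorem tendstoInMeasure_zero_of_norm_le_of_tendsto_integral [IsFiniteMeasure μ]
    {f : ι → α → E} {h : ι → α → ℝ} (hfh : ∀ i x, ‖f i x‖ ≤ h i x) (hh : ∀ i, Integrable (h i) μ)
    (hlim : Tendsto (fun i => ∫ x, h i x ∂μ) l (𝓝 0)) : TendstoInMeasure μ f l 0 := by
  rw [tendstoInMeasure_iff_measureReal_norm]
  intro ε hε
  have hmarkov : ∀ i, μ.real {x | ε ≤ ‖f i x - (0 : α → E) x‖} ≤ (∫ x, h i x ∂μ) / ε := by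
    intro i
    rw [le_div_iff₀' hε]
    refine (mul_le_mul_of_nonneg_left (measureReal_mono fun x hx => ?_) hε.le).trans
      (mul_meas_ge_le_integral_of_nonneg
        (ae_of_all _ fun x => (norm_nonneg _).trans (hfh i x)) (hh i) ε)
    simp only [mem_ofPred_eq, Pi.zero_apply, sub_zero] at hx ⊢
    exact hx.trans (hfh i x)
  exact squeeze_zero (fun _ => measureReal_nonneg) hmarkov (by simpa using hlim.div_const ε)

end MeasureTheory

namespace ProbabilityTheory

section ProbabilityIntegralTransform

variable {μ : Measure ℝ} [IsProbabilityMeasure μ]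

lemma measure_cdf_le_eq_ofReal (hcont : Continuous (cdf μ)) {u : ℝ} (hu : u < 1) :
    μ {x | cdf μ x ≤ u} = ENNReal.ofReal u := by
  set S := {x | cdf μ x ≤ u}
  apply le_antisymm
  · rcases S.eq_empty_or_nonempty with hS | hS
    · simp [hS]
    have hclosed : IsClosed S := isClosed_le hcont continuous_const
    have hbdd : BddAbove S := by
      obtain ⟨b, hb⟩ := ((tendsto_cdf_atTop μ).eventually (lt_mem_nhds hu)).exists_forall_of_atTop
      exact ⟨b, fun x hx => not_lt.1 fun hbx => (hb x hbx.le).not_ge hx⟩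
    have hlower : IsLowerSet S := fun a b hba ha => ((cdf μ).mono hba).trans ha
    have hSIic : S = Iic (sSup S) := by
      rw [← lowerClosure_eq_Iic_csSup hS hbdd hclosed, hlower.lowerClosure]
    rw [hSIic, ← ofReal_cdf]
    exact ENNReal.ofReal_le_ofReal (hclosed.csSup_mem hS hbdd)
  · rcases le_or_gt u 0 with hu0 | hu0
    · simp [ENNReal.ofReal_of_nonpos hu0]
    obtain ⟨a, ha⟩ := ((tendsto_cdf_atBot μ).eventually (gt_mem_nhds hu0)).exists
    obtain ⟨b, hb⟩ := ((tendsto_cdf_atTop μ).eventually (lt_mem_nhds hu)).exists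
    obtain ⟨q, hq⟩ := intermediate_value_univ a b hcont ⟨ha.le, hb.le⟩
    rw [← hq, ofReal_cdf]
    exact measure_mono fun x hx => ((cdf μ).mono hx).trans_eq hq

lemma map_cdf_eq_volume_restrict (hcont : Continuous (cdf μ)) :
    μ.map (cdf μ) = volume.restrict (Ioc 0 1) := by
  have hmeas : Measurable (cdf μ) := (cdf μ).mono.measurable
  have : IsProbabilityMeasure (μ.map (cdf μ)) := Measure.isProbabilityMeasure_map hmeas.aemeasurable
  refine Measure.ext_of_Iic _ _ fun u => ?_
  rw [Measure.map_apply hmeas measurableSet_Iic, Measure.restrict_apply measurableSet_Iic]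
  rcases lt_or_ge u 1 with hu | hu
  · rw [Iic_inter_Ioc_of_le hu.le, Real.volume_Ioc, sub_zero]
    exact measure_cdf_le_eq_ofReal hcont hu
  · have hpre : cdf μ ⁻¹' Iic u = univ := eq_univ_of_forall fun x => (cdf_le_one μ x).trans hu
    rw [hpre, measure_univ, inter_eq_right.2 (Ioc_subset_Iic_self.trans (Iic_subset_Iic.2 hu)),
      Real.volume_Ioc, sub_zero, ENNReal.ofReal_one]

lemma integral_one_sub_cdf_pow (hcont : Continuous (cdf μ)) (k : ℕ) :
    ∫ x, (1 - cdf μ x) ^ k ∂μ = 1 / (k + 1) := by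
  have hmeas : Measurable (cdf μ) := (cdf μ).mono.measurable
  rw [← integral_map (f := fun u : ℝ => (1 - u) ^ k) hmeas.aemeasurable (by fun_prop),
    map_cdf_eq_volume_restrict hcont, ← intervalIntegral.integral_of_le zero_le_one,
    intervalIntegral.integral_comp_sub_left (fun x => x ^ k) 1]
  simp [integral_pow]

end ProbabilityIntegralTransform

variable {Ω : Type*} [MeasurableSpace Ω] {P : Measure Ω} [IsProbabilityMeasure P]

lemma measureReal_lt_eq_one_sub_cdf {Y : Ω → ℝ} (hY : Measurable Y) (x : ℝ) :
    P.real {ω | x < Y ω} = 1 - cdf (P.map Y) x := by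
  have : IsProbabilityMeasure (P.map Y) := Measure.isProbabilityMeasure_map hY.aemeasurable
  change P.real (Y ⁻¹' Ioi x) = _
  rw [← map_measureReal_apply hY measurableSet_Ioi, ← compl_Iic,
    measureReal_compl measurableSet_Iic, probReal_univ, cdf_eq_real]

theorem IndepFun.integral_comp_eq_zero {β γ : Type*} [MeasurableSpace β] [MeasurableSpace γ]
    {Y : Ω → β} {Z : Ω → γ} (hYZ : IndepFun Y Z P) (hY : Measurable Y) (hZ : Measurable Z)
    {φ : β × γ → ℝ} (hφm : Measurable φ) (hφ : Integrable (fun ω => φ (Y ω, Z ω)) P)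
    (h0 : ∀ z, ∫ y, φ (y, z) ∂(P.map Y) = 0) :
    ∫ ω, φ (Y ω, Z ω) ∂P = 0 := by
  have hYZm : Measurable fun ω => (Y ω, Z ω) := hY.prodMk hZ
  have hmap : P.map (fun ω => (Y ω, Z ω)) = (P.map Y).prod (P.map Z) :=
    (indepFun_iff_map_prod_eq_prod_map_map hY.aemeasurable hZ.aemeasurable).1 hYZ
  have hφint : Integrable φ ((P.map Y).prod (P.map Z)) := by
    rwa [← hmap, integrable_map_measure hφm.aestronglyMeasurable hYZm.aemeasurable]
  rw [← integral_map hYZm.aemeasurable hφm.aestronglyMeasurable, hmap, integral_prod_symm φ hφint]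
  simp [h0]

theorem tendstoInMeasure_average_comp {X : ℕ → Ω → ℝ} (hm : ∀ i, Measurable (X i))
    (hindep : iIndepFun X P) (hid : ∀ i, IdentDistrib (X i) (X 0) P P) {f : ℝ → ℝ}
    (hf : Measurable f) (hint : Integrable (fun ω => f (X 0 ω)) P) :
    TendstoInMeasure P (fun (n : ℕ) ω => 1 / (n : ℝ) * ∑ i ∈ Finset.range n, f (X i ω)) atTop
      (fun _ => ∫ ω, f (X 0 ω) ∂P) := by
  refine tendstoInMeasure_of_tendsto_ae (fun n => ?_) ?_
  · exact ((Finset.measurable_sum _ fun i _ => hf.comp (hm i)).const_mul _).aestronglyMeasurable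
  · filter_upwards [strong_law_ae_real (fun i ω => f (X i ω)) hint
      (fun i j hij => (hindep.indepFun hij).comp hf hf) (fun i => (hid i).comp hf)] with ω hω
    simpa only [one_div_mul_eq_div] using hω

end ProbabilityTheory

section EmpiricalSurvival

variable {Ω : Type*} {X : ℕ → Ω → ℝ} {G : ℝ → ℝ}

noncomputable def empiricalSurvival (X : ℕ → Ω → ℝ) (n : ℕ) (x : ℝ) (ω : Ω) : ℝ :=
  1 / (n : ℝ) * ∑ j ∈ Finset.range n, if x < X j ω then 1 else 0

noncomputable def centeredExceedance (G : ℝ → ℝ) (x y : ℝ) : ℝ := (if x < y then 1 else 0) - G x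

lemma empiricalSurvival_mem_Icc (n : ℕ) (x : ℝ) (ω : Ω) :
    empiricalSurvival X n x ω ∈ Icc 0 1 := by
  rcases n.eq_zero_or_pos with rfl | hn
  · simp [empiricalSurvival]
  rw [empiricalSurvival, Finset.sum_boole, one_div_mul_eq_div]
  refine ⟨by positivity, (div_le_one (by positivity)).2 ?_⟩
  exact_mod_cast (Finset.card_filter_le _ _).trans (Finset.card_range n).le

lemma empiricalSurvival_sub_eq {n : ℕ} (hn : n ≠ 0) (x : ℝ) (ω : Ω) :
    empiricalSurvival X n x ω - G x =
      1 / (n : ℝ) * ∑ j ∈ Finset.range n, centeredExceedance G x (X j ω) := by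
  simp only [empiricalSurvival, centeredExceedance, Finset.sum_sub_distrib, Finset.sum_const,
    Finset.card_range, nsmul_eq_mul]
  field_simp

lemma abs_empiricalSurvival_sub_le_one {x : ℝ} (hG : G x ∈ Icc 0 1) (n : ℕ) (ω : Ω) :
    |empiricalSurvival X n x ω - G x| ≤ 1 := by
  have h := empiricalSurvival_mem_Icc (X := X) n x ω
  exact abs_le.2 ⟨by linarith [h.1, hG.2], by linarith [h.2, hG.1]⟩

lemma abs_centeredExceedance_le_one {x : ℝ} (hG : G x ∈ Icc 0 1) (y : ℝ) :
    |centeredExceedance G x y| ≤ 1 := by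
  rw [centeredExceedance, abs_le]
  split_ifs <;> constructor <;> linarith [hG.1, hG.2]

lemma measurable_centeredExceedance (hGm : Measurable G) :
    Measurable (Function.uncurry (centeredExceedance G)) :=
  (Measurable.ite (measurableSet_lt measurable_fst measurable_snd) measurable_const
    measurable_const).sub (hGm.comp measurable_fst)

variable [MeasurableSpace Ω] {P : Measure Ω} [IsProbabilityMeasure P]

lemma measurable_empiricalSurvival (hm : ∀ i, Measurable (X i)) {Y : Ω → ℝ} (hY : Measurable Y)
    (n : ℕ) : Measurable fun ω => empiricalSurvival X n (Y ω) ω :=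
  (Finset.measurable_sum _ fun j _ =>
    Measurable.ite (measurableSet_lt hY (hm j)) measurable_const measurable_const).const_mul _

lemma mem_Icc_of_measureReal_lt_eq (hG : ∀ j x, P.real {ω | x < X j ω} = G x) (x : ℝ) :
    G x ∈ Icc 0 1 :=
  hG 0 x ▸ ⟨measureReal_nonneg, measureReal_le_one⟩

lemma integrable_abs_empiricalSurvival_sub_mul_sq (hm : ∀ i, Measurable (X i))
    (hG : ∀ j x, P.real {ω | x < X j ω} = G x) (hGm : Measurable G) {i : ℕ}
    (hint : Integrable (fun ω => X i ω ^ 2) P) (n : ℕ) :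
    Integrable (fun ω => |empiricalSurvival X n (X i ω) ω - G (X i ω)| * X i ω ^ 2) P :=
  hint.bdd_mul
    ((measurable_empiricalSurvival hm (hm i) n).sub (hGm.comp (hm i))).abs.aestronglyMeasurable
    (ae_of_all _ fun ω => by
      simpa using abs_empiricalSurvival_sub_le_one (mem_Icc_of_measureReal_lt_eq hG _) n ω)

lemma integral_centeredExceedance_mul_eq_zero (hm : ∀ i, Measurable (X i))
    (hindep : iIndepFun X P) (hG : ∀ j x, P.real {ω | x < X j ω} = G x) (hGm : Measurable G)
    {i j l : ℕ} (hji : j ≠ i) (hjl : j ≠ l)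
    {ψ : ℝ × ℝ → ℝ} (hψm : Measurable ψ) (hψ : Integrable (fun ω => ψ (X i ω, X l ω)) P) :
    ∫ ω, centeredExceedance G (X i ω) (X j ω) * ψ (X i ω, X l ω) ∂P = 0 := by
  have hind : IndepFun (X j) (fun ω => (X i ω, X l ω)) P :=
    (hindep.indepFun_prodMk hm i l j hji.symm hjl.symm).symm
  refine hind.integral_comp_eq_zero (φ := fun p => centeredExceedance G p.2.1 p.1 * ψ p.2)
    (hm j) ((hm i).prodMk (hm l)) ?_ ?_ fun z => ?_
  · exact ((measurable_centeredExceedance hGm).comp (measurable_snd.fst.prodMk measurable_fst)).mul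
      (hψm.comp measurable_snd)
  · exact hψ.bdd_mul (((measurable_centeredExceedance hGm).comp
      ((hm i).prodMk (hm j))).aestronglyMeasurable)
      (ae_of_all _ fun ω => abs_centeredExceedance_le_one (mem_Icc_of_measureReal_lt_eq hG _) _)
  · have hs : MeasurableSet {ω | z.1 < X j ω} := measurableSet_lt measurable_const (hm j)
    have hexc : ∫ ω, centeredExceedance G z.1 (X j ω) ∂P = 0 := by
      change ∫ ω, {ω | z.1 < X j ω}.indicator 1 ω - G z.1 ∂P = 0
      rw [integral_sub ((integrable_const 1).indicator hs) (integrable_const _),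
        integral_indicator_one hs, hG, integral_const, probReal_univ, one_smul, sub_self]
    dsimp only
    rw [integral_mul_const, integral_map (f := centeredExceedance G z.1) (hm j).aemeasurable
      ((measurable_centeredExceedance hGm).comp measurable_prodMk_left).aestronglyMeasurable, hexc,
      zero_mul]

lemma integral_centeredExceedance_mul_centeredExceedance_mul_sq_eq_zero
    (hm : ∀ i, Measurable (X i)) (hindep : iIndepFun X P)
    (hG : ∀ j x, P.real {ω | x < X j ω} = G x) (hGm : Measurable G)
    {i : ℕ} (hint : Integrable (fun ω => X i ω ^ 2) P) {j l : ℕ} (hjl : j ≠ l) :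
    ∫ ω, centeredExceedance G (X i ω) (X j ω) *
      (centeredExceedance G (X i ω) (X l ω) * X i ω ^ 2) ∂P = 0 := by
  have hψm : Measurable fun p : ℝ × ℝ => centeredExceedance G p.1 p.2 * p.1 ^ 2 :=
    (measurable_centeredExceedance hGm).mul (measurable_fst.pow_const 2)
  have hψ : ∀ l, Integrable (fun ω => centeredExceedance G (X i ω) (X l ω) * X i ω ^ 2) P :=
    fun l => hint.bdd_mul ((measurable_centeredExceedance hGm).comp
      ((hm i).prodMk (hm l))).aestronglyMeasurable
      (ae_of_all _ fun ω => abs_centeredExceedance_le_one (mem_Icc_of_measureReal_lt_eq hG _) _)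
  rcases eq_or_ne j i with rfl | hji
  -- here `l ≠ j = i`, so `X l` is the variable to integrate out
  · simp_rw [mul_left_comm (centeredExceedance G (X j _) (X j _))]
    exact integral_centeredExceedance_mul_eq_zero hm hindep hG hGm hjl.symm hjl.symm hψm (hψ j)
  · exact integral_centeredExceedance_mul_eq_zero hm hindep hG hGm hji hjl hψm (hψ l)

lemma integral_sq_sum_centeredExceedance_mul_sq_le
    (hm : ∀ i, Measurable (X i)) (hindep : iIndepFun X P)
    (hG : ∀ j x, P.real {ω | x < X j ω} = G x) (hGm : Measurable G)
    {i : ℕ} (hint : Integrable (fun ω => X i ω ^ 2) P) (n : ℕ) :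
    ∫ ω, (∑ j ∈ Finset.range n, centeredExceedance G (X i ω) (X j ω)) ^ 2 * X i ω ^ 2 ∂P ≤
      n * ∫ ω, X i ω ^ 2 ∂P := by
  set W : ℕ → Ω → ℝ := fun j ω => centeredExceedance G (X i ω) (X j ω)
  have hWm : ∀ j, Measurable (W j) := fun j =>
    (measurable_centeredExceedance hGm).comp ((hm i).prodMk (hm j))
  have hW1 : ∀ j ω, |W j ω| ≤ 1 := fun j ω =>
    abs_centeredExceedance_le_one (mem_Icc_of_measureReal_lt_eq hG _) _
  have hterm : ∀ j l, Integrable (fun ω => W j ω * (W l ω * X i ω ^ 2)) P := fun j l =>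
    (hint.bdd_mul (hWm l).aestronglyMeasurable (ae_of_all _ (hW1 l))).bdd_mul
      (hWm j).aestronglyMeasurable (ae_of_all _ (hW1 j))
  have hdiag : ∀ j, ∫ ω, W j ω * (W j ω * X i ω ^ 2) ∂P ≤ ∫ ω, X i ω ^ 2 ∂P := fun j =>
    integral_mono (hterm j j) hint fun ω => by
      rw [← mul_assoc, ← sq]
      exact mul_le_of_le_one_left (sq_nonneg _) ((sq_le_one_iff_abs_le_one _).2 (hW1 j ω))
  calc ∫ ω, (∑ j ∈ Finset.range n, W j ω) ^ 2 * X i ω ^ 2 ∂P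
      = ∑ j ∈ Finset.range n, ∑ l ∈ Finset.range n, ∫ ω, W j ω * (W l ω * X i ω ^ 2) ∂P := by
        simp_rw [sq (∑ j ∈ Finset.range n, W j _), Finset.sum_mul_sum, Finset.sum_mul, mul_assoc]
        rw [integral_finsetSum _ fun j _ => integrable_finsetSum _ fun l _ => hterm j l]
        exact Finset.sum_congr rfl fun j _ => integral_finsetSum _ fun l _ => hterm j l
    _ = ∑ j ∈ Finset.range n, ∫ ω, W j ω * (W j ω * X i ω ^ 2) ∂P :=
        Finset.sum_congr rfl fun j hj => Finset.sum_eq_single_of_mem j hj fun l _ hlj =>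
          integral_centeredExceedance_mul_centeredExceedance_mul_sq_eq_zero hm hindep hG hGm hint
            hlj.symm
    _ ≤ n * ∫ ω, X i ω ^ 2 ∂P := by
        simpa using Finset.sum_le_sum fun j (_ : j ∈ Finset.range n) => hdiag j

lemma integral_sq_empiricalSurvival_sub_mul_sq_le
    (hm : ∀ i, Measurable (X i)) (hindep : iIndepFun X P)
    (hG : ∀ j x, P.real {ω | x < X j ω} = G x) (hGm : Measurable G)
    {i : ℕ} (hint : Integrable (fun ω => X i ω ^ 2) P) {n : ℕ} (hn : n ≠ 0) :
    ∫ ω, (empiricalSurvival X n (X i ω) ω - G (X i ω)) ^ 2 * X i ω ^ 2 ∂P ≤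
      (∫ ω, X i ω ^ 2 ∂P) / n := by
  have hn' : (0 : ℝ) < n := by positivity
  simp_rw [empiricalSurvival_sub_eq hn, mul_pow, mul_assoc, integral_const_mul]
  calc (1 / (n : ℝ)) ^ 2 * ∫ ω, (∑ j ∈ Finset.range n, centeredExceedance G (X i ω) (X j ω)) ^ 2
        * X i ω ^ 2 ∂P
      ≤ (1 / (n : ℝ)) ^ 2 * (n * ∫ ω, X i ω ^ 2 ∂P) := by
        gcongr
        exact integral_sq_sum_centeredExceedance_mul_sq_le hm hindep hG hGm hint n
    _ = (∫ ω, X i ω ^ 2 ∂P) / n := by field_simp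

lemma integral_abs_empiricalSurvival_sub_mul_sq_le
    (hm : ∀ i, Measurable (X i)) (hindep : iIndepFun X P)
    (hG : ∀ j x, P.real {ω | x < X j ω} = G x) (hGm : Measurable G)
    {i : ℕ} (hint : Integrable (fun ω => X i ω ^ 2) P) {n : ℕ} (hn : n ≠ 0) :
    ∫ ω, |empiricalSurvival X n (X i ω) ω - G (X i ω)| * X i ω ^ 2 ∂P ≤
      (∫ ω, X i ω ^ 2 ∂P) / √n := by
  set D : Ω → ℝ := fun ω => empiricalSurvival X n (X i ω) ω - G (X i ω)
  have hs : 0 < √(n : ℝ) := Real.sqrt_pos.2 (by positivity)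
  have hss : √(n : ℝ) ^ 2 = n := Real.sq_sqrt n.cast_nonneg
  have hDm : Measurable D := (measurable_empiricalSurvival hm (hm i) n).sub (hGm.comp (hm i))
  have hD2int : Integrable (fun ω => D ω ^ 2 * X i ω ^ 2) P :=
    hint.bdd_mul (hDm.pow_const 2).aestronglyMeasurable (c := 1) (ae_of_all _ fun ω => by
      rw [Real.norm_eq_abs, abs_pow]
      exact pow_le_one₀ (abs_nonneg _)
        (abs_empiricalSurvival_sub_le_one (mem_Icc_of_measureReal_lt_eq hG _) n ω))
  have hamgm : ∀ ω, |D ω| * X i ω ^ 2 ≤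
      √n / 2 * (D ω ^ 2 * X i ω ^ 2) + 1 / (2 * √n) * X i ω ^ 2 := fun ω => by
    have key : |D ω| ≤ √n / 2 * D ω ^ 2 + 1 / (2 * √n) := by
      rw [← sq_abs (D ω)]
      field_simp
      nlinarith [sq_nonneg (√n * |D ω| - 1)]
    nlinarith [mul_le_mul_of_nonneg_right key (sq_nonneg (X i ω))]
  calc ∫ ω, |D ω| * X i ω ^ 2 ∂P
      ≤ ∫ ω, √n / 2 * (D ω ^ 2 * X i ω ^ 2) + 1 / (2 * √n) * X i ω ^ 2 ∂P :=
        integral_mono (integrable_abs_empiricalSurvival_sub_mul_sq hm hG hGm hint n)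
          ((hD2int.const_mul _).add (hint.const_mul _)) hamgm
    _ = √n / 2 * ∫ ω, D ω ^ 2 * X i ω ^ 2 ∂P + 1 / (2 * √n) * ∫ ω, X i ω ^ 2 ∂P := by
        rw [integral_add (hD2int.const_mul _) (hint.const_mul _), integral_const_mul,
          integral_const_mul]
    _ ≤ √n / 2 * ((∫ ω, X i ω ^ 2 ∂P) / n) + 1 / (2 * √n) * ∫ ω, X i ω ^ 2 ∂P := by
        gcongr
        exact integral_sq_empiricalSurvival_sub_mul_sq_le hm hindep hG hGm hint hn
    _ = (∫ ω, X i ω ^ 2 ∂P) / √n := by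
        field_simp
        rw [hss]
        ring

lemma integral_average_abs_empiricalSurvival_sub_mul_sq_le
    (hm : ∀ i, Measurable (X i)) (hindep : iIndepFun X P)
    (hid : ∀ i, IdentDistrib (X i) (X 0) P P) (hint2 : Integrable (fun ω => X 0 ω ^ 2) P)
    (hG : ∀ j x, P.real {ω | x < X j ω} = G x) (hGm : Measurable G) (n : ℕ) :
    ∫ ω, 1 / (n : ℝ) * ∑ i ∈ Finset.range n,
        |empiricalSurvival X n (X i ω) ω - G (X i ω)| * X i ω ^ 2 ∂P ≤
      (∫ ω, X 0 ω ^ 2 ∂P) / √n := by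
  rcases eq_or_ne n 0 with rfl | hn
  · simp
  have hsq : ∀ i, IdentDistrib (fun ω => X i ω ^ 2) (fun ω => X 0 ω ^ 2) P P := fun i =>
    (hid i).comp (measurable_id.pow_const 2)
  have hint : ∀ i, Integrable (fun ω => X i ω ^ 2) P := fun i => (hsq i).integrable_iff.2 hint2
  rw [integral_const_mul, integral_finsetSum _ fun i _ =>
    integrable_abs_empiricalSurvival_sub_mul_sq hm hG hGm (hint i) n]
  calc 1 / (n : ℝ) * ∑ i ∈ Finset.range n,
        ∫ ω, |empiricalSurvival X n (X i ω) ω - G (X i ω)| * X i ω ^ 2 ∂P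
      ≤ 1 / (n : ℝ) * ∑ i ∈ Finset.range n, (∫ ω, X 0 ω ^ 2 ∂P) / √n := by
        gcongr with i
        rw [← (hsq i).integral_eq]
        exact integral_abs_empiricalSurvival_sub_mul_sq_le hm hindep hG hGm (hint i) hn
    _ = (∫ ω, X 0 ω ^ 2 ∂P) / √n := by simp [field]

end EmpiricalSurvival

section EstimatingFunction

noncomputable def estimatingFunction (ν : ℕ) (R p x : ℝ) : ℝ := (1 - ν * p ^ (ν - 1) - R) * x

variable {ν : ℕ} {R p q : ℝ}

lemma abs_estimatingFunction_le (hp : p ∈ Icc 0 1) (x : ℝ) :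
    |estimatingFunction ν R p x| ≤ (1 + ν + |R|) * |x| := by
  rw [estimatingFunction, abs_mul]
  gcongr
  have h0 : 0 ≤ p ^ (ν - 1) := pow_nonneg hp.1 _
  have h1 : p ^ (ν - 1) ≤ 1 := pow_le_one₀ hp.1 hp.2
  have hν : (0 : ℝ) ≤ ν := ν.cast_nonneg
  rw [abs_le]
  constructor <;> nlinarith [le_abs_self R, neg_abs_le R]

lemma abs_sq_estimatingFunction_sub_sq_le (hp : p ∈ Icc 0 1) (hq : q ∈ Icc 0 1) (x : ℝ) :
    |estimatingFunction ν R p x ^ 2 - estimatingFunction ν R q x ^ 2| ≤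
      2 * ν ^ 2 * (1 + ν + |R|) * (|p - q| * x ^ 2) := by
  have hpow : |q ^ (ν - 1) - p ^ (ν - 1)| ≤ ν * |p - q| := by
    have hmax : max |q| |p| ≤ 1 := max_le (by rw [abs_of_nonneg hq.1]; exact hq.2)
      (by rw [abs_of_nonneg hp.1]; exact hp.2)
    calc |q ^ (ν - 1) - p ^ (ν - 1)| ≤ |q - p| * (ν - 1 : ℕ) * max |q| |p| ^ (ν - 1 - 1) :=
          abs_pow_sub_pow_le _ _ _
      _ ≤ |q - p| * ν * 1 := by
          gcongr
          · exact_mod_cast Nat.sub_le ν 1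
          · exact pow_le_one₀ ((abs_nonneg _).trans (le_max_left _ _)) hmax
      _ = ν * |p - q| := by rw [abs_sub_comm]; ring
  have hdiff : |estimatingFunction ν R p x - estimatingFunction ν R q x| ≤
      ν * (ν * |p - q|) * |x| := by
    rw [show estimatingFunction ν R p x - estimatingFunction ν R q x =
        ν * (q ^ (ν - 1) - p ^ (ν - 1)) * x by simp only [estimatingFunction]; ring,
      abs_mul, abs_mul, Nat.abs_cast]
    gcongr
  have hsum : |estimatingFunction ν R p x + estimatingFunction ν R q x| ≤
      2 * (1 + ν + |R|) * |x| := by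
    linarith [abs_add_le (estimatingFunction ν R p x) (estimatingFunction ν R q x),
      abs_estimatingFunction_le (ν := ν) (R := R) hp x,
      abs_estimatingFunction_le (ν := ν) (R := R) hq x]
  calc |estimatingFunction ν R p x ^ 2 - estimatingFunction ν R q x ^ 2|
      = |estimatingFunction ν R p x + estimatingFunction ν R q x| *
          |estimatingFunction ν R p x - estimatingFunction ν R q x| := by
        rw [sq_sub_sq, abs_mul]
    _ ≤ 2 * (1 + ν + |R|) * |x| * (ν * (ν * |p - q|) * |x|) :=
        mul_le_mul hsum hdiff (abs_nonneg _) (by positivity)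
    _ = 2 * ν ^ 2 * (1 + ν + |R|) * (|p - q| * x ^ 2) := by rw [← sq_abs x]; ring

variable {Ω : Type*} [MeasurableSpace Ω] {P : Measure Ω}

lemma memLp_two_estimatingFunction {Y p : Ω → ℝ} (hY : MemLp Y 2 P) (hp : Measurable p)
    (hp01 : ∀ ω, p ω ∈ Icc 0 1) (ν : ℕ) (R : ℝ) :
    MemLp (fun ω => estimatingFunction ν R (p ω) (Y ω)) 2 P :=
  hY.of_le_mul (c := 1 + ν + |R|)
    ((by fun_prop : Measurable fun ω => 1 - ν * p ω ^ (ν - 1) - R).aestronglyMeasurable.mul hY.1)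
    (ae_of_all _ fun ω => abs_estimatingFunction_le (hp01 ω) (Y ω))

lemma integral_estimatingFunction_eq_zero [IsProbabilityMeasure P] {Y : Ω → ℝ}
    (hY : Measurable Y) (hYint : Integrable Y P) (hcont : Continuous (cdf (P.map Y)))
    (hν : 1 ≤ ν) {μ : ℝ} (hμ : μ = ∫ ω, Y ω ∂P) (hμ0 : μ ≠ 0)
    (hR : R = (-(ν : ℝ) / μ) * ((∫ ω, Y ω * (1 - cdf (P.map Y) (Y ω)) ^ (ν - 1) ∂P) -
      μ * (∫ ω, (1 - cdf (P.map Y) (Y ω)) ^ (ν - 1) ∂P))) :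
    ∫ ω, estimatingFunction ν R (1 - cdf (P.map Y) (Y ω)) (Y ω) ∂P = 0 := by
  have : IsProbabilityMeasure (P.map Y) := Measure.isProbabilityMeasure_map hY.aemeasurable
  have hfm : Measurable fun x => (1 - cdf (P.map Y) x) ^ (ν - 1) :=
    (measurable_const.sub (cdf (P.map Y)).mono.measurable).pow_const _
  have hmoment : ∫ ω, (1 - cdf (P.map Y) (Y ω)) ^ (ν - 1) ∂P = 1 / ν := by
    rw [← integral_map hY.aemeasurable hfm.aestronglyMeasurable, integral_one_sub_cdf_pow hcont,
      Nat.cast_sub hν, Nat.cast_one, sub_add_cancel]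
  have hYS : Integrable (fun ω => Y ω * (1 - cdf (P.map Y) (Y ω)) ^ (ν - 1)) P :=
    hYint.mul_bdd (hfm.comp hY).aestronglyMeasurable (c := 1) (ae_of_all _ fun ω => by
      rw [Real.norm_eq_abs, abs_of_nonneg (pow_nonneg (sub_nonneg.2 (cdf_le_one _ _)) _)]
      exact pow_le_one₀ (sub_nonneg.2 (cdf_le_one _ _)) (sub_le_self _ (cdf_nonneg _ _)))
  have hexpand : (fun ω => estimatingFunction ν R (1 - cdf (P.map Y) (Y ω)) (Y ω)) =
      fun ω => Y ω - ν * (Y ω * (1 - cdf (P.map Y) (Y ω)) ^ (ν - 1)) - R * Y ω := by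
    funext ω
    simp only [estimatingFunction]
    ring
  rw [hexpand, integral_sub (by exact hYint.sub (hYS.const_mul _)) (hYint.const_mul _),
    integral_sub hYint (hYS.const_mul _), integral_const_mul, integral_const_mul, ← hμ, hR,
    hmoment]
  have hν0 : (ν : ℝ) ≠ 0 := by exact_mod_cast (by omega : ν ≠ 0)
  field_simp
  ring

theorem tendstoInMeasure_average_sq_estimatingFunction_sub [IsProbabilityMeasure P]
    {X : ℕ → Ω → ℝ} {G : ℝ → ℝ} (hm : ∀ i, Measurable (X i)) (hindep : iIndepFun X P)
    (hid : ∀ i, IdentDistrib (X i) (X 0) P P) (hint2 : Integrable (fun ω => X 0 ω ^ 2) P)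
    (hG : ∀ j x, P.real {ω | x < X j ω} = G x) (hGm : Measurable G) (ν : ℕ) (R : ℝ) :
    TendstoInMeasure P (fun (n : ℕ) ω =>
        1 / (n : ℝ) * ∑ i ∈ Finset.range n,
          estimatingFunction ν R (empiricalSurvival X n (X i ω) ω) (X i ω) ^ 2 -
        1 / (n : ℝ) * ∑ i ∈ Finset.range n, estimatingFunction ν R (G (X i ω)) (X i ω) ^ 2)
      atTop 0 := by
  set K : ℝ := 2 * ν ^ 2 * (1 + ν + |R|)
  have hK : 0 ≤ K := by positivity
  have hint : ∀ i, Integrable (fun ω => X i ω ^ 2) P := fun i =>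
    ((hid i).comp (measurable_id.pow_const 2)).integrable_iff.2 hint2
  refine tendstoInMeasure_zero_of_norm_le_of_tendsto_integral
    (h := fun n ω => K * (1 / (n : ℝ) * ∑ i ∈ Finset.range n,
        |empiricalSurvival X n (X i ω) ω - G (X i ω)| * X i ω ^ 2))
    (fun n ω => ?_) (fun n => ?_) ?_
  · calc ‖_‖ = 1 / (n : ℝ) * |∑ i ∈ Finset.range n,
          (estimatingFunction ν R (empiricalSurvival X n (X i ω) ω) (X i ω) ^ 2 -
            estimatingFunction ν R (G (X i ω)) (X i ω) ^ 2)| := by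
          rw [Real.norm_eq_abs, ← mul_sub, ← Finset.sum_sub_distrib, abs_mul,
            abs_of_nonneg (by positivity)]
      _ ≤ 1 / (n : ℝ) * ∑ i ∈ Finset.range n,
          K * (|empiricalSurvival X n (X i ω) ω - G (X i ω)| * X i ω ^ 2) := by
          gcongr
          exact (Finset.abs_sum_le_sum_abs _ _).trans <| Finset.sum_le_sum fun i _ =>
            abs_sq_estimatingFunction_sub_sq_le (empiricalSurvival_mem_Icc _ _ _)
              (mem_Icc_of_measureReal_lt_eq hG _) _
      _ = _ := by rw [← Finset.mul_sum]; ring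
  · exact ((integrable_finsetSum _ fun i _ =>
      integrable_abs_empiricalSurvival_sub_mul_sq hm hG hGm (hint i) n).const_mul _).const_mul K
  · refine squeeze_zero (fun n => integral_nonneg fun ω => by positivity) (fun n => ?_)
      (g := fun n : ℕ => K * ((∫ ω, X 0 ω ^ 2 ∂P) / √n)) ?_
    · rw [integral_const_mul]
      exact mul_le_mul_of_nonneg_left
        (integral_average_abs_empiricalSurvival_sub_mul_sq_le hm hindep hid hint2 hG hGm n) hK
    · simpa using (tendsto_const_nhds.div_atTop
        (Real.tendsto_sqrt_atTop.comp tendsto_natCast_atTop_atTop)).const_mul K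

end EstimatingFunction

theorem empirical_estimating_function_lln_general {Ω : Type*} [MeasurableSpace Ω]
    (P : Measure Ω) [IsProbabilityMeasure P] (ν : ℕ) (hν : 2 ≤ ν)
    (X : ℕ → Ω → ℝ) (hm : ∀ i, Measurable (X i))
    (hid : ∀ i, IdentDistrib (X i) (X 0) P P)
    (hindep : iIndepFun X P)
    (hint2 : Integrable (fun ω => (X 0 ω) ^ 2) P)
    (μ : ℝ) (hμ : μ = ∫ ω, X 0 ω ∂P) (hμpos : 0 < μ)
    (F : ℝ → ℝ) (hF : ∀ t, F t = (P.map (X 0) (Set.Iic t)).toReal)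
    (hFcont : Continuous F)
    (R : ℝ) (hR : R = (-(ν : ℝ) / μ) * ((∫ ω, X 0 ω * (1 - F (X 0 ω)) ^ (ν - 1) ∂P) -
      μ * (∫ ω, (1 - F (X 0 ω)) ^ (ν - 1) ∂P))) :
    TendstoInMeasure P
        (fun (n : ℕ) ω => (1 / (n : ℝ)) *
          ∑ i ∈ Finset.range n,
            ((1 - (ν : ℝ) * ((1 / (n : ℝ)) *
                ∑ j ∈ Finset.range n,
                  (if X i ω < X j ω then (1 : ℝ) else 0)) ^ (ν - 1)) * X i ω -
              R * X i ω) ^ 2)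
        atTop
        (fun _ => variance (fun ω => (1 - (ν : ℝ) * (1 - F (X 0 ω)) ^ (ν - 1) - R) * X 0 ω) P) ∧
      variance (fun ω => (1 - (ν : ℝ) * (1 - F (X 0 ω)) ^ (ν - 1) - R) * X 0 ω) P =
        ∫ ω, ((1 - (ν : ℝ) * (1 - F (X 0 ω)) ^ (ν - 1) - R) * X 0 ω) ^ 2 ∂P := by
  have : IsProbabilityMeasure (P.map (X 0)) := Measure.isProbabilityMeasure_map (hm 0).aemeasurable
  obtain rfl : F = cdf (P.map (X 0)) := funext fun t => by rw [hF, cdf_eq_real, measureReal_def]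
  have hX2 : MemLp (X 0) 2 P := (memLp_two_iff_integrable_sq (hm 0).aestronglyMeasurable).2 hint2
  have hGm : Measurable fun x => 1 - cdf (P.map (X 0)) x :=
    measurable_const.sub (cdf _).mono.measurable
  have hG : ∀ j x, P.real {ω | x < X j ω} = 1 - cdf (P.map (X 0)) x := fun j x => by
    rw [measureReal_lt_eq_one_sub_cdf (hm j), (hid j).map_eq]
  have hC := memLp_two_estimatingFunction hX2 (p := fun ω => 1 - cdf (P.map (X 0)) (X 0 ω))
    (hGm.comp (hm 0)) (fun ω => mem_Icc_of_measureReal_lt_eq hG _) ν R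
  have hvar := variance_of_integral_eq_zero hC.aestronglyMeasurable.aemeasurable
    (integral_estimatingFunction_eq_zero (hm 0) (hX2.integrable one_le_two) hFcont (by omega) hμ
      hμpos.ne' hR)
  refine ⟨?_, hvar⟩
  have hlim := (tendstoInMeasure_average_comp hm hindep hid
    (f := fun x => estimatingFunction ν R (1 - cdf (P.map (X 0)) x) x ^ 2)
    (by unfold estimatingFunction; fun_prop) hC.integrable_sq).add
    (tendstoInMeasure_average_sq_estimatingFunction_sub hm hindep hid hint2 hG hGm ν R)
  convert hlim using 1
  · funext n ω
    simp only [Pi.add_apply, add_sub_cancel]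
    congr 1
    exact Finset.sum_congr rfl fun i _ => by simp only [estimatingFunction, empiricalSurvival]; ring
  · funext
    rw [Pi.add_apply, Pi.zero_apply, add_zero]
    exact hvar

/-- For an i.i.d. sequence of non-negative random variables with
continuous distribution function `F`, finite second moment and positive mean `μ`, with
`R_ν = (−ν/μ) Cov(X₁, F̄(X₁)^{ν−1})`, empirical survival function
`F̄_n(x) = (1/n) Σ_j 1{X_j > x}` and
`Ĉ(Xᵢ, R_ν) = (1 − ν F̄_n(Xᵢ)^{ν−1}) Xᵢ − R_ν Xᵢ`, one has
`(1/n) Σᵢ Ĉ²(Xᵢ, R_ν) → σ₁²` in probability, where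
`σ₁² = Var((1 − ν F̄(X₁)^{ν−1} − R_ν) X₁) = E[((1 − ν F̄(X₁)^{ν−1} − R_ν) X₁)²]`. -/
theorem empirical_estimating_function_lln {Ω : Type*} [MeasurableSpace Ω]
    (P : Measure Ω) [IsProbabilityMeasure P] (ν : ℕ) (hν : 2 ≤ ν)
    (X : ℕ → Ω → ℝ) (hm : ∀ i, Measurable (X i))
    (hpos : ∀ i ω, 0 ≤ X i ω)
    (hid : ∀ i, IdentDistrib (X i) (X 0) P P)
    (hindep : iIndepFun X P)
    (hint2 : Integrable (fun ω => (X 0 ω) ^ 2) P)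
    (μ : ℝ) (hμ : μ = ∫ ω, X 0 ω ∂P) (hμpos : 0 < μ)
    (F : ℝ → ℝ) (hF : ∀ t, F t = (P.map (X 0) (Set.Iic t)).toReal)
    (hFcont : Continuous F)
    (R : ℝ) (hR : R = (-(ν : ℝ) / μ) * ((∫ ω, X 0 ω * (1 - F (X 0 ω)) ^ (ν - 1) ∂P) -
      μ * (∫ ω, (1 - F (X 0 ω)) ^ (ν - 1) ∂P))) :
    TendstoInMeasure P
        (fun (n : ℕ) ω => (1 / (n : ℝ)) *
          ∑ i ∈ Finset.range n,
            ((1 - (ν : ℝ) * ((1 / (n : ℝ)) *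
                ∑ j ∈ Finset.range n,
                  (if X i ω < X j ω then (1 : ℝ) else 0)) ^ (ν - 1)) * X i ω -
              R * X i ω) ^ 2)
        atTop
        (fun _ => variance (fun ω => (1 - (ν : ℝ) * (1 - F (X 0 ω)) ^ (ν - 1) - R) * X 0 ω) P) ∧
      variance (fun ω => (1 - (ν : ℝ) * (1 - F (X 0 ω)) ^ (ν - 1) - R) * X 0 ω) P =
        ∫ ω, ((1 - (ν : ℝ) * (1 - F (X 0 ω)) ^ (ν - 1) - R) * X 0 ω) ^ 2 ∂P :=
  empirical_estimating_function_lln_general P ν hν X hm hid hindep hint2 μ hμ hμpos F hF hFcont R hR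
end
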